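/- arXiv:2406.17410 — 6 statements merged into one kernel-verified Lean document; each statement's English description precedes it below -/
import Mathlib

section
/- Suppose H(θ) ≥ θ·h_m + (p' ∫₀¹ D(u)^{p'−1} g(u) du)^{1/p'}. Then for every c > −h_m the traveling-wave problem with speed c has no solution. If moreover the inequality is strict, then the traveling-wave problem with speed c has no solution for any c ≥ −h_m. -/
open Set MeasureTheory Filter

/-- The conjugate exponent `p' = p/(p-1)`. -/
noncomputable def pconj (p : ℝ) : ℝ := p / (p - 1)

/-- The constant `k(p)` from the paper. -/
noncomputable def kfun (p : ℝ) : ℝ :=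
  if p < 2 then 1 / (2 ^ (pconj p - 1) - 1)
  else if p = 2 then 1
  else pconj p / (pconj p - 1 +
    (1 + pconj p * (pconj p - 1) ^ ((1 : ℝ) / (pconj p - 2)) +
      (pconj p - 1) ^ (pconj p / (pconj p - 2))) /
    (1 + (pconj p - 1) ^ ((1 : ℝ) / (pconj p - 2))) ^ pconj p)

/-- Standing assumptions on the data `p, θ, D, H, h, g` (combustion setting). -/
structure CombSetup (p θ : ℝ) (D H h g : ℝ → ℝ) : Prop where
  hp : 1 < p
  hθ0 : 0 < θ
  hθ1 : θ < 1
  hD : ContDiffOn ℝ 1 D (Ioo 0 1)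
  hDpos : ∀ v ∈ Ioo (0 : ℝ) 1, 0 < D v
  hH : ContDiffOn ℝ 1 H (Icc 0 1)
  hH0 : H 0 = 0
  hh : ContinuousOn h (Icc 0 1)
  hHd : ∀ v ∈ Icc (0 : ℝ) 1, HasDerivWithinAt H (h v) (Icc 0 1) v
  hgc : ContinuousOn g (Icc 0 1)
  hg0 : ∀ v ∈ Icc (0 : ℝ) θ, g v = 0
  hgpos : ∀ v ∈ Ioo θ 1, 0 < g v
  hg1 : g 1 = 0
  hInt : IntegrableOn (fun v => D v ^ (pconj p - 1) * g v) (Ioo 0 1)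

/-- The diffusive flux `ξ ↦ D(u(ξ)) |u'(ξ)|^{p-2} u'(ξ)`. -/
noncomputable def flux (p : ℝ) (D u : ℝ → ℝ) : ℝ → ℝ :=
  fun ξ => D (u ξ) * (|deriv u ξ| ^ (p - 2) * deriv u ξ)

/-- Solution of the traveling-wave problem with speed `c`. -/
structure IsTWSol (p c : ℝ) (D h g : ℝ → ℝ) (u : ℝ → ℝ) : Prop where
  cont : Continuous u
  mem : ∀ ξ, u ξ ∈ Icc (0 : ℝ) 1
  smooth : ContDiffOn ℝ 1 u {ξ | u ξ ∈ Ioo (0 : ℝ) 1}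
  eqn : ∀ ξ ∈ {ξ | u ξ ∈ Ioo (0 : ℝ) 1},
    HasDerivAt (flux p D u) (-(c + h (u ξ)) * deriv u ξ - g (u ξ)) ξ
  flux_cont : Continuous (fun ξ => if u ξ ∈ Ioo (0 : ℝ) 1 then flux p D u ξ else 0)
  flux_to0 : ∀ ε > 0, ∃ δ > 0, ∀ ξ, u ξ ∈ Ioo (0 : ℝ) 1 → u ξ < δ → |flux p D u ξ| < ε
  flux_to1 : ∀ ε > 0, ∃ δ > 0, ∀ ξ, u ξ ∈ Ioo (0 : ℝ) 1 → 1 - δ < u ξ → |flux p D u ξ| < ε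
  lim_bot : Tendsto u atBot (nhds 1)
  lim_top : Tendsto u atTop (nhds 0)

/-- Positive solution of the first-order problem with parameter `c`. -/
structure IsFOSol (p c : ℝ) (D h g : ℝ → ℝ) (y : ℝ → ℝ) : Prop where
  cont : ContinuousOn y (Icc 0 1)
  eqn : ∀ v ∈ Ioo (0 : ℝ) 1, HasDerivAt y
    (pconj p * ((c + h v) * (max (y v) 0) ^ (1 / p) - D v ^ (pconj p - 1) * g v)) v
  y0 : y 0 = 0
  y1 : y 1 = 0
  pos : ∀ v ∈ Ioo (0 : ℝ) 1, 0 < y v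

open Topology

/-!
Let `Φ` be the flux, extended by `0` off `{0 < u < 1}`, and `ξ₀` the last point where `u = θ`.
Beyond `ξ₀` the wave stays in `[0, θ]`, where `g = 0`, so the equation integrates once to
`Φ + c u + H(u) ≡ 0` there; hence `Φ(ξ₀) = -(cθ + H(θ))`, and this is `≤ 0` because `u` crosses
`θ` downwards. Behind `ξ₀` consider the energy `E = (Φ⁻)^{p'} + p' ∫₀ᵘ D^{p'-1} g`. Wherever
`Φ < 0` it has derivative `-p' D(u)^{p'-1} (c + h(u)) u'² ≤ 0` (as `c ≥ -h_m`); wherever `Φ ≥ 0`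
it is at most `p' ∫₀¹ D^{p'-1} g`, which is also its limit at `-∞`. So
`(cθ + H(θ))^{p'} = E(ξ₀) ≤ p' ∫₀¹ D^{p'-1} g`, contradicting the hypothesis.
-/

lemma pconj_gt_one {p : ℝ} (hp : 1 < p) : 1 < pconj p := by
  rw [pconj, lt_div_iff₀ (by linarith)]; linarith

lemma sub_one_mul_pconj_sub_one {p : ℝ} (hp : 1 < p) : (p - 1) * (pconj p - 1) = 1 := by
  have h : p - 1 ≠ 0 := by linarith
  rw [pconj]; field_simp; ring

lemma abs_rpow_mul_self_of_nonpos {p x : ℝ} (hp : 1 < p) (hx : x ≤ 0) :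
    |x| ^ (p - 2) * x = -|x| ^ (p - 1) := by
  rcases hx.lt_or_eq with hx | rfl
  · rw [abs_of_neg hx, show p - 1 = p - 2 + 1 by ring,
      Real.rpow_add_one (neg_ne_zero.2 hx.ne)]
    ring
  · simp [Real.zero_rpow (show p - 1 ≠ 0 by linarith)]

lemma HasDerivAt.nonpos_of_forall_le_right {f : ℝ → ℝ} {f' a : ℝ} (hf : HasDerivAt f f' a)
    (hle : ∀ x, a < x → f x ≤ f a) : f' ≤ 0 := by
  have hslope := (hasDerivWithinAt_iff_tendsto_slope' (s := Ioi a) (lt_irrefl a)).1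
    hf.hasDerivWithinAt
  refine le_of_tendsto hslope (eventually_nhdsWithin_of_forall fun x hx => ?_)
  rw [slope_def_field]
  exact div_nonpos_of_nonpos_of_nonneg (by linarith [hle x hx]) (by linarith [mem_Ioi.1 hx])

theorem le_of_hasDerivAt_nonneg_off_closed_atTop {f f' : ℝ → ℝ} {S : Set ℝ} {a L M : ℝ}
    (hf : Continuous f) (hS : IsClosed S)
    (hderiv : ∀ x, a < x → x ∉ S → HasDerivAt f (f' x) x)
    (hf' : ∀ x, a < x → x ∉ S → 0 ≤ f' x)
    (hSM : ∀ x ∈ S, a ≤ x → f x ≤ M) (hlim : Tendsto f atTop (𝓝 L)) (hLM : L ≤ M) :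
    f a ≤ M := by
  by_cases haS : a ∈ S
  · exact hSM a haS le_rfl
  have hmono : ∀ b, a ≤ b → (∀ x ∈ Ioo a b, x ∉ S) → f a ≤ f b := by
    intro b hab hgood
    refine monotoneOn_of_hasDerivWithinAt_nonneg (f' := f') (convex_Icc a b) hf.continuousOn
      (fun x hx => ?_) (fun x hx => ?_) (left_mem_Icc.2 hab) (right_mem_Icc.2 hab) hab
    · rw [interior_Icc] at hx
      exact (hderiv x hx.1 (hgood x hx)).hasDerivWithinAt
    · rw [interior_Icc] at hx
      exact hf' x hx.1 (hgood x hx)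
  have hbdd : BddBelow (S ∩ Ici a) := ⟨a, fun x hx => hx.2⟩
  by_cases hT : (S ∩ Ici a).Nonempty
  · have hb := (hS.inter isClosed_Ici).csInf_mem hT hbdd
    refine (hmono _ hb.2 fun x hx hxS => ?_).trans (hSM _ hb.1 hb.2)
    exact (csInf_le hbdd ⟨hxS, hx.1.le⟩).not_gt hx.2
  · refine le_trans (ge_of_tendsto hlim ?_) hLM
    filter_upwards [eventually_ge_atTop a] with b hb
    exact hmono b hb fun x hx hxS => hT ⟨x, hxS, hx.1.le⟩

theorem le_of_hasDerivAt_nonpos_off_closed_atBot {f f' : ℝ → ℝ} {S : Set ℝ} {a L M : ℝ}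
    (hf : Continuous f) (hS : IsClosed S)
    (hderiv : ∀ x, x < a → x ∉ S → HasDerivAt f (f' x) x)
    (hf' : ∀ x, x < a → x ∉ S → f' x ≤ 0)
    (hSM : ∀ x ∈ S, x ≤ a → f x ≤ M) (hlim : Tendsto f atBot (𝓝 L)) (hLM : L ≤ M) :
    f a ≤ M := by
  have := le_of_hasDerivAt_nonneg_off_closed_atTop (f := fun x => f (-x))
    (f' := fun x => -f' (-x)) (S := Neg.neg ⁻¹' S) (a := -a)
    (hf.comp continuous_neg) (hS.preimage continuous_neg)
    (fun x hx hxS => by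
      simpa [Function.comp_def] using (hderiv (-x) (by linarith) hxS).comp x (hasDerivAt_neg x))
    (fun x hx hxS => neg_nonneg.2 (hf' (-x) (by linarith) hxS))
    (fun x hxS hx => hSM (-x) hxS (by linarith)) (hlim.comp tendsto_neg_atTop_atBot) hLM
  simpa using this

lemma flux_nonpos {p : ℝ} {D u : ℝ → ℝ} {ξ : ℝ} (hD : 0 ≤ D (u ξ)) (hu : deriv u ξ ≤ 0) :
    flux p D u ξ ≤ 0 :=
  mul_nonpos_of_nonneg_of_nonpos hD
    (mul_nonpos_of_nonneg_of_nonpos (Real.rpow_nonneg (abs_nonneg _) _) hu)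

lemma flux_nonneg {p : ℝ} {D u : ℝ → ℝ} {ξ : ℝ} (hD : 0 ≤ D (u ξ)) (hu : 0 ≤ deriv u ξ) :
    0 ≤ flux p D u ξ :=
  mul_nonneg hD (mul_nonneg (Real.rpow_nonneg (abs_nonneg _) _) hu)

lemma neg_flux_eq {p : ℝ} {D u : ℝ → ℝ} {ξ : ℝ} (hp : 1 < p) (hu : deriv u ξ ≤ 0) :
    -flux p D u ξ = D (u ξ) * |deriv u ξ| ^ (p - 1) := by
  simp only [flux, abs_rpow_mul_self_of_nonpos hp hu]
  ring

noncomputable def extFlux (p : ℝ) (D u : ℝ → ℝ) (ξ : ℝ) : ℝ :=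
  if u ξ ∈ Ioo (0 : ℝ) 1 then flux p D u ξ else 0

section extFlux

variable {p : ℝ} {D u : ℝ → ℝ} {ξ : ℝ}

lemma extFlux_of_mem (h : u ξ ∈ Ioo (0 : ℝ) 1) : extFlux p D u ξ = flux p D u ξ := if_pos h

lemma extFlux_of_notMem (h : u ξ ∉ Ioo (0 : ℝ) 1) : extFlux p D u ξ = 0 := if_neg h

lemma mem_Ioo_of_extFlux_ne_zero (h : extFlux p D u ξ ≠ 0) : u ξ ∈ Ioo (0 : ℝ) 1 :=
  not_not.1 fun hu => h (extFlux_of_notMem hu)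

end extFlux

noncomputable def energy (p : ℝ) (D g u : ℝ → ℝ) (ξ : ℝ) : ℝ :=
  max (-extFlux p D u ξ) 0 ^ pconj p +
    pconj p * ∫ v in (0 : ℝ)..u ξ, D v ^ (pconj p - 1) * g v

lemma IntervalIntegrable.continuousOn_primitive_Icc {f : ℝ → ℝ}
    (hf : IntervalIntegrable f volume 0 1) :
    ContinuousOn (fun t => ∫ v in (0 : ℝ)..t, f v) (Icc 0 1) := by
  simpa only [uIcc_of_le zero_le_one] using
    intervalIntegral.continuousOn_primitive_interval' hf left_mem_uIcc

namespace IsTWSol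

variable {p c : ℝ} {D h g u : ℝ → ℝ}

lemma hasDerivAt (hu : IsTWSol p c D h g u) {ξ : ℝ} (hξ : u ξ ∈ Ioo (0 : ℝ) 1) :
    HasDerivAt u (deriv u ξ) ξ :=
  ((hu.smooth.contDiffAt ((isOpen_Ioo.preimage hu.cont).mem_nhds hξ)).differentiableAt
    one_ne_zero).hasDerivAt

lemma continuous_extFlux (hu : IsTWSol p c D h g u) : Continuous (extFlux p D u) :=
  hu.flux_cont

lemma hasDerivAt_extFlux (hu : IsTWSol p c D h g u) {ξ : ℝ} (hξ : u ξ ∈ Ioo (0 : ℝ) 1) :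
    HasDerivAt (extFlux p D u) (-(c + h (u ξ)) * deriv u ξ - g (u ξ)) ξ :=
  (hu.eqn ξ hξ).congr_of_eventuallyEq <|
    eventually_of_mem ((isOpen_Ioo.preimage hu.cont).mem_nhds hξ) fun _ hη => extFlux_of_mem hη

lemma tendsto_extFlux_atTop (hu : IsTWSol p c D h g u) :
    Tendsto (extFlux p D u) atTop (𝓝 0) := by
  refine Metric.tendsto_nhds.2 fun ε hε => ?_
  obtain ⟨δ, hδ, hsmall⟩ := hu.flux_to0 ε hε
  filter_upwards [hu.lim_top.eventually (eventually_lt_nhds hδ)] with ξ hξ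
  by_cases hm : u ξ ∈ Ioo (0 : ℝ) 1
  · simpa [extFlux_of_mem hm] using hsmall ξ hm hξ
  · simpa [extFlux_of_notMem hm] using hε

lemma tendsto_extFlux_atBot (hu : IsTWSol p c D h g u) :
    Tendsto (extFlux p D u) atBot (𝓝 0) := by
  refine Metric.tendsto_nhds.2 fun ε hε => ?_
  obtain ⟨δ, hδ, hsmall⟩ := hu.flux_to1 ε hε
  filter_upwards [hu.lim_bot.eventually (eventually_gt_nhds (by linarith : 1 - δ < 1))]
    with ξ hξ
  by_cases hm : u ξ ∈ Ioo (0 : ℝ) 1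
  · simpa [extFlux_of_mem hm] using hsmall ξ hm hξ
  · simpa [extFlux_of_notMem hm] using hε

lemma exists_last_eq (hu : IsTWSol p c D h g u) {θ : ℝ} (hθ : θ ∈ Ioo (0 : ℝ) 1) :
    ∃ ξ₀, u ξ₀ = θ ∧ ∀ ξ, ξ₀ < ξ → u ξ < θ := by
  obtain ⟨a, ha⟩ := (hu.lim_bot.eventually (eventually_gt_nhds hθ.2)).exists
  obtain ⟨b, hb⟩ := eventually_atTop.1 (hu.lim_top.eventually (eventually_lt_nhds hθ.1))
  have hbdd : BddAbove {ξ | θ ≤ u ξ} :=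
    ⟨b, fun ξ hξ => not_lt.1 fun hbξ => (hb ξ hbξ.le).not_ge hξ⟩
  have hlt : ∀ ξ, sSup {ξ | θ ≤ u ξ} < ξ → u ξ < θ :=
    fun ξ hξ => not_le.1 fun hθξ => (le_csSup hbdd hθξ).not_gt hξ
  have hright : Tendsto u (𝓝[>] sSup {ξ | θ ≤ u ξ}) (𝓝 (u (sSup {ξ | θ ≤ u ξ}))) :=
    hu.cont.continuousAt.tendsto.mono_left nhdsWithin_le_nhds
  refine ⟨_, le_antisymm ?_
    ((isClosed_le continuous_const hu.cont).csSup_mem ⟨a, ha.le⟩ hbdd), hlt⟩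
  exact le_of_tendsto hright (eventually_nhdsWithin_of_forall fun ξ hξ => (hlt ξ hξ).le)

lemma extFlux_nonpos_of_forall_le_right (hu : IsTWSol p c D h g u) {ξ₀ : ℝ}
    (hξ₀ : u ξ₀ ∈ Ioo (0 : ℝ) 1) (hD : 0 ≤ D (u ξ₀)) (hle : ∀ ξ, ξ₀ < ξ → u ξ ≤ u ξ₀) :
    extFlux p D u ξ₀ ≤ 0 := by
  rw [extFlux_of_mem hξ₀]
  exact flux_nonpos hD ((hu.hasDerivAt hξ₀).nonpos_of_forall_le_right hle)

lemma extFlux_add_eq_zero (hu : IsTWSol p c D h g u) {H : ℝ → ℝ} {θ ξ₀ : ℝ} (hθ : θ < 1)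
    (hHd : ∀ v ∈ Icc (0 : ℝ) 1, HasDerivWithinAt H (h v) (Icc 0 1) v) (hH0 : H 0 = 0)
    (hg : ∀ v ∈ Icc (0 : ℝ) θ, g v = 0) (hle : ∀ ξ, ξ₀ < ξ → u ξ ≤ θ) :
    extFlux p D u ξ₀ + c * u ξ₀ + H (u ξ₀) = 0 := by
  set ψ : ℝ → ℝ := fun ξ => extFlux p D u ξ + c * u ξ + H (u ξ)
  have hH : ContinuousOn H (Icc 0 1) := fun v hv => (hHd v hv).continuousWithinAt
  have hψ : Continuous ψ := (hu.continuous_extFlux.add (continuous_const.mul hu.cont)).add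
    (hH.comp_continuous hu.cont hu.mem)
  have hclosed : IsClosed {ξ | u ξ = 0} := isClosed_eq hu.cont continuous_const
  have hderiv : ∀ ξ, ξ₀ < ξ → ξ ∉ {ξ | u ξ = 0} → HasDerivAt ψ 0 ξ := by
    intro ξ hξ hξ0
    have hmem : u ξ ∈ Ioo (0 : ℝ) 1 :=
      ⟨lt_of_le_of_ne (hu.mem ξ).1 (Ne.symm hξ0), (hle ξ hξ).trans_lt hθ⟩
    have hHu : HasDerivAt H (h (u ξ)) (u ξ) :=
      (hHd _ (Ioo_subset_Icc_self hmem)).hasDerivAt (Icc_mem_nhds hmem.1 hmem.2)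
    refine (((hu.hasDerivAt_extFlux hmem).add ((hu.hasDerivAt hmem).const_mul c)).add
      (hHu.comp ξ (hu.hasDerivAt hmem))).congr_deriv ?_
    rw [hg _ ⟨hmem.1.le, hle ξ hξ⟩]
    ring
  have hS : ∀ ξ ∈ {ξ | u ξ = 0}, ψ ξ = 0 := by
    intro ξ hξ
    simp [ψ, show u ξ = 0 from hξ, extFlux_of_notMem, hH0]
  have hlim : Tendsto ψ atTop (𝓝 0) := by
    have hHu : Tendsto (fun ξ => H (u ξ)) atTop (𝓝 0) := hH0 ▸
      (hH 0 (left_mem_Icc.2 zero_le_one)).tendsto.comp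
        (tendsto_nhdsWithin_iff.2 ⟨hu.lim_top, Eventually.of_forall hu.mem⟩)
    simpa using (hu.tendsto_extFlux_atTop.add (hu.lim_top.const_mul c)).add hHu
  have hψ_le := le_of_hasDerivAt_nonneg_off_closed_atTop hψ hclosed hderiv
    (fun _ _ _ => le_rfl) (fun ξ hξ _ => (hS ξ hξ).le) hlim le_rfl
  have hψ_ge := le_of_hasDerivAt_nonneg_off_closed_atTop (f := fun ξ => -ψ ξ)
    (f' := fun _ => 0) (M := 0) hψ.neg hclosed
    (fun ξ hξ h0 => (hderiv ξ hξ h0).neg.congr_deriv neg_zero)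
    (fun _ _ _ => le_rfl) (fun ξ hξ _ => by simp [hS ξ hξ]) hlim.neg (by simp)
  exact le_antisymm hψ_le (by simpa using hψ_ge)

lemma continuous_energy (hu : IsTWSol p c D h g u) (hp : 1 < p)
    (hInt : IntervalIntegrable (fun v => D v ^ (pconj p - 1) * g v) volume 0 1) :
    Continuous (energy p D g u) :=
  ((hu.continuous_extFlux.neg.max continuous_const).rpow_const fun _ =>
      Or.inr (zero_le_one.trans (pconj_gt_one hp).le)).add
    (continuous_const.mul (hInt.continuousOn_primitive_Icc.comp_continuous hu.cont hu.mem))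

lemma tendsto_energy_atBot (hu : IsTWSol p c D h g u) (hp : 1 < p)
    (hInt : IntervalIntegrable (fun v => D v ^ (pconj p - 1) * g v) volume 0 1) :
    Tendsto (energy p D g u) atBot
      (𝓝 (pconj p * ∫ v in (0 : ℝ)..1, D v ^ (pconj p - 1) * g v)) := by
  have hq : 0 < pconj p := zero_lt_one.trans (pconj_gt_one hp)
  have hflux : Tendsto (fun ξ => max (-extFlux p D u ξ) 0 ^ pconj p) atBot (𝓝 0) := by
    have hF : Continuous fun x : ℝ => max (-x) 0 ^ pconj p :=
      (continuous_neg.max continuous_const).rpow_const fun _ => Or.inr hq.le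
    simpa [Function.comp_def, Real.zero_rpow hq.ne'] using
      (hF.tendsto 0).comp hu.tendsto_extFlux_atBot
  have hprim := (hInt.continuousOn_primitive_Icc 1 (right_mem_Icc.2 zero_le_one)).tendsto.comp
    (tendsto_nhdsWithin_iff.2 ⟨hu.lim_bot, Eventually.of_forall hu.mem⟩)
  have := hflux.add (hprim.const_mul (pconj p))
  rwa [zero_add] at this

lemma hasDerivAt_energy (hu : IsTWSol p c D h g u) (hp : 1 < p)
    (hDpos : ∀ v ∈ Ioo (0 : ℝ) 1, 0 < D v) (hDc : ContinuousOn D (Ioo 0 1))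
    (hgc : ContinuousOn g (Ioo 0 1))
    (hInt : IntervalIntegrable (fun v => D v ^ (pconj p - 1) * g v) volume 0 1)
    {ξ : ℝ} (hξ : extFlux p D u ξ < 0) :
    HasDerivAt (energy p D g u)
      (-(pconj p * D (u ξ) ^ (pconj p - 1) * (c + h (u ξ)) * deriv u ξ ^ 2)) ξ := by
  set q := pconj p
  have hmem := mem_Ioo_of_extFlux_ne_zero hξ.ne
  have hD := hDpos _ hmem
  have hd : deriv u ξ ≤ 0 := by
    by_contra! hd
    exact (flux_nonneg hD.le hd.le).not_gt (extFlux_of_mem hmem ▸ hξ)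
  -- `(p - 1)(p' - 1) = 1` turns `(-Φ)^{p'-1}` into `D(u)^{p'-1} |u'|`; the `g`-terms then cancel.
  have hpow : (-extFlux p D u ξ) ^ (q - 1) = D (u ξ) ^ (q - 1) * -deriv u ξ := by
    rw [extFlux_of_mem hmem, neg_flux_eq hp hd,
      Real.mul_rpow hD.le (Real.rpow_nonneg (abs_nonneg _) _), ← Real.rpow_mul (abs_nonneg _),
      sub_one_mul_pconj_sub_one hp, Real.rpow_one, abs_of_nonpos hd]
  have hflux : HasDerivAt (fun η => max (-extFlux p D u η) 0 ^ q)
      (-(-(c + h (u ξ)) * deriv u ξ - g (u ξ)) * q * (-extFlux p D u ξ) ^ (q - 1)) ξ := by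
    refine ((hu.hasDerivAt_extFlux hmem).neg.rpow_const
      (Or.inl (by simp only [Pi.neg_apply]; linarith))).congr_of_eventuallyEq ?_
    filter_upwards [hu.continuous_extFlux.continuousAt.eventually (gt_mem_nhds hξ)] with η hη
    rw [max_eq_left (by linarith), Pi.neg_apply]
  have hf : ContinuousOn (fun v => D v ^ (q - 1) * g v) (Ioo 0 1) :=
    (hDc.rpow_const fun v hv => Or.inl (hDpos v hv).ne').mul hgc
  have hprim : HasDerivAt (fun η => ∫ v in (0 : ℝ)..u η, D v ^ (q - 1) * g v)
      (D (u ξ) ^ (q - 1) * g (u ξ) * deriv u ξ) ξ :=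
    (intervalIntegral.integral_hasDerivAt_right
      (hInt.mono_set (uIcc_subset_uIcc left_mem_uIcc
        (by rw [uIcc_of_le zero_le_one]; exact Ioo_subset_Icc_self hmem)))
      (hf.stronglyMeasurableAtFilter isOpen_Ioo _ hmem)
      (hf.continuousAt (isOpen_Ioo.mem_nhds hmem))).comp ξ (hu.hasDerivAt hmem)
  refine (hflux.add (hprim.const_mul q)).congr_deriv ?_
  rw [hpow]
  ring

theorem energy_le (hu : IsTWSol p c D h g u) (hp : 1 < p)
    (hDpos : ∀ v ∈ Ioo (0 : ℝ) 1, 0 < D v) (hDc : ContinuousOn D (Ioo 0 1))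
    (hgc : ContinuousOn g (Ioo 0 1)) (hg : ∀ v ∈ Ioo (0 : ℝ) 1, 0 ≤ g v)
    (hInt : IntervalIntegrable (fun v => D v ^ (pconj p - 1) * g v) volume 0 1)
    (hc : ∀ v ∈ Ioo (0 : ℝ) 1, 0 ≤ c + h v) (ξ : ℝ) :
    energy p D g u ξ ≤ pconj p * ∫ v in (0 : ℝ)..1, D v ^ (pconj p - 1) * g v := by
  have hq : 0 < pconj p := zero_lt_one.trans (pconj_gt_one hp)
  refine le_of_hasDerivAt_nonpos_off_closed_atBot (S := {η | 0 ≤ extFlux p D u η})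
    (hu.continuous_energy hp hInt) (isClosed_le continuous_const hu.continuous_extFlux)
    (fun η _ hη => hu.hasDerivAt_energy hp hDpos hDc hgc hInt (not_le.1 hη))
    (fun η _ hη => ?_) (fun η hη _ => ?_) (hu.tendsto_energy_atBot hp hInt) le_rfl
  · have hmem := mem_Ioo_of_extFlux_ne_zero (not_le.1 hη).ne
    have := mul_nonneg (mul_nonneg (mul_nonneg hq.le (Real.rpow_nonneg (hDpos _ hmem).le
      (pconj p - 1))) (hc _ hmem)) (sq_nonneg (deriv u η))
    linarith
  · rw [energy, max_eq_right (neg_nonpos.2 hη), Real.zero_rpow hq.ne', zero_add]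
    refine mul_le_mul_of_nonneg_left (intervalIntegral.integral_mono_interval le_rfl
      (hu.mem η).1 (hu.mem η).2 ?_ hInt) hq.le
    rw [← Measure.restrict_congr_set Ioo_ae_eq_Ioc]
    exact ae_restrict_of_forall_mem measurableSet_Ioo fun v hv =>
      mul_nonneg (Real.rpow_nonneg (hDpos v hv).le _) (hg v hv)

theorem mul_add_le_integral_rpow {θ : ℝ} {H : ℝ → ℝ}
    (S : CombSetup p θ D H h g) (hc : -sInf (h '' Icc 0 1) ≤ c) (hu : IsTWSol p c D h g u) :
    c * θ + H θ ≤
      (pconj p * ∫ v in Ioo (0 : ℝ) 1, D v ^ (pconj p - 1) * g v) ^ (1 / pconj p) := by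
  have hθ : θ ∈ Ioo (0 : ℝ) 1 := ⟨S.hθ0, S.hθ1⟩
  have hq : 0 < pconj p := zero_lt_one.trans (pconj_gt_one S.hp)
  have hg : ∀ v ∈ Ioo (0 : ℝ) 1, 0 ≤ g v := fun v hv => by
    rcases le_or_gt v θ with hvθ | hvθ
    exacts [(S.hg0 v ⟨hv.1.le, hvθ⟩).ge, (S.hgpos v ⟨hvθ, hv.2⟩).le]
  have hch : ∀ v ∈ Ioo (0 : ℝ) 1, 0 ≤ c + h v := fun v hv => by
    linarith [csInf_le (isCompact_Icc.image_of_continuousOn S.hh).bddBelow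
      (mem_image_of_mem h (Ioo_subset_Icc_self hv))]
  have hInt : IntervalIntegrable (fun v => D v ^ (pconj p - 1) * g v) volume 0 1 :=
    (intervalIntegrable_iff_integrableOn_Ioo_of_le zero_le_one).2 S.hInt
  obtain ⟨ξ₀, huξ₀, hlt⟩ := hu.exists_last_eq hθ
  have hψ := hu.extFlux_add_eq_zero S.hθ1 S.hHd S.hH0 S.hg0 fun ξ hξ => (hlt ξ hξ).le
  have hΦ := hu.extFlux_nonpos_of_forall_le_right (huξ₀ ▸ hθ) (S.hDpos _ (huξ₀ ▸ hθ)).le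
    fun ξ hξ => huξ₀ ▸ (hlt ξ hξ).le
  rw [huξ₀] at hψ
  set A := c * θ + H θ
  have hA : 0 ≤ A := by linarith
  have hprimθ : ∫ v in (0 : ℝ)..θ, D v ^ (pconj p - 1) * g v = 0 := by
    rw [intervalIntegral.integral_congr (g := fun _ => 0) fun v hv => ?_,
      intervalIntegral.integral_zero]
    rw [uIcc_of_le S.hθ0.le] at hv
    simp [S.hg0 v hv]
  have hE := hu.energy_le S.hp S.hDpos S.hD.continuousOn (S.hgc.mono Ioo_subset_Icc_self) hg
    hInt hch ξ₀
  rw [energy, huξ₀, hprimθ, mul_zero, add_zero, max_eq_left (by linarith),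
    show -extFlux p D u ξ₀ = A by linarith, intervalIntegral.integral_of_le zero_le_one,
    integral_Ioc_eq_integral_Ioo] at hE
  calc A = (A ^ pconj p) ^ (1 / pconj p) := by
        rw [← Real.rpow_mul hA, mul_one_div_cancel hq.ne', Real.rpow_one]
    _ ≤ _ := Real.rpow_le_rpow (Real.rpow_nonneg hA _) hE (by positivity)

end IsTWSol

/-- Theorem: Nonexistence.
If `H(θ) ≥ θ·h_m + (p' ∫₀¹ D^{p'-1} g)^{1/p'}`, the traveling-wave problem has no
solution for any `c > -h_m`; with strict inequality, no solution for any `c ≥ -h_m`. -/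
theorem stmt0 (p θ : ℝ) (D H h g : ℝ → ℝ) (S : CombSetup p θ D H h g)
    (hmain : θ * sInf (h '' Icc 0 1) +
      (pconj p * ∫ v in Ioo (0 : ℝ) 1, D v ^ (pconj p - 1) * g v) ^ (1 / pconj p) ≤ H θ) :
    (∀ c : ℝ, -sInf (h '' Icc 0 1) < c → ∀ u : ℝ → ℝ, ¬ IsTWSol p c D h g u) ∧
    (θ * sInf (h '' Icc 0 1) +
        (pconj p * ∫ v in Ioo (0 : ℝ) 1, D v ^ (pconj p - 1) * g v) ^ (1 / pconj p) < H θ →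
      ∀ c : ℝ, -sInf (h '' Icc 0 1) ≤ c → ∀ u : ℝ → ℝ, ¬ IsTWSol p c D h g u) := by
  refine ⟨fun c hc u hu => ?_, fun hstrict c hc u hu => ?_⟩
  · have := hu.mul_add_le_integral_rpow S hc.le
    linarith [mul_lt_mul_of_pos_right hc S.hθ0]
  · have := hu.mul_add_le_integral_rpow S hc
    linarith [mul_le_mul_of_nonneg_right hc S.hθ0.le]
end

section
/- If there exists a positive solution y of the first-order problem with parameter c ∈ ℝ, then c ≥ −h(0). -/
open Set MeasureTheory Filter

/-- Necessary condition `c ≥ -h(0)` for the first-order problem. -/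
theorem stmt6 (p θ c : ℝ) (D H h g y : ℝ → ℝ) (S : CombSetup p θ D H h g)
    (hy : IsFOSol p c D h g y) :
    -h 0 ≤ c := by
  by_contra hc
  push_neg at hc
  have hch : c + h 0 < 0 := by linarith
  have hθ1 := S.hθ1
  have hθ0 := S.hθ0
  have h0m : (0:ℝ) ∈ Icc (0:ℝ) 1 := ⟨le_refl 0, by linarith⟩
  have hcw : ContinuousWithinAt h (Icc 0 1) 0 := S.hh 0 h0m
  rw [Metric.continuousWithinAt_iff] at hcw
  obtain ⟨δ₁, hδ₁, hδ⟩ := hcw (-(c + h 0)) (by linarith)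
  set δ := min (δ₁/2) θ with hδdef
  have hδpos : 0 < δ := lt_min (by linarith) hθ0
  have hδθ : δ ≤ θ := min_le_right _ _
  have hδ1 : δ < 1 := lt_of_le_of_lt hδθ hθ1
  have hneg : ∀ v ∈ Icc (0:ℝ) δ, c + h v < 0 := by
    intro v hv
    have hv1 : v ∈ Icc (0:ℝ) 1 := ⟨hv.1, le_trans hv.2 hδ1.le⟩
    have hd : dist v 0 < δ₁ := by
      rw [Real.dist_eq, sub_zero, abs_of_nonneg hv.1]
      have h1 : v ≤ δ := hv.2
      have h2 : δ ≤ δ₁/2 := min_le_left _ _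
      linarith
    have := hδ hv1 hd
    rw [Real.dist_eq] at this
    have := abs_lt.mp this
    linarith [this.1, this.2]
  have hpc : 0 < pconj p := by
    have := S.hp
    unfold pconj
    apply div_pos <;> linarith
  have hcont : ContinuousOn y (Icc 0 δ) :=
    hy.cont.mono (Icc_subset_Icc le_rfl hδ1.le)
  have hderiv : ∀ v ∈ interior (Icc (0:ℝ) δ), deriv y v < 0 := by
    intro v hv
    rw [interior_Icc] at hv
    have hv01 : v ∈ Ioo (0:ℝ) 1 := ⟨hv.1, lt_trans hv.2 hδ1⟩
    have hd := (hy.eqn v hv01).deriv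
    rw [hd]
    have hg : g v = 0 := S.hg0 v ⟨hv.1.le, le_trans hv.2.le hδθ⟩
    have hyv : 0 < y v := hy.pos v hv01
    have hmax : max (y v) 0 = y v := max_eq_left hyv.le
    have hX : 0 < (y v) ^ (1/p : ℝ) := Real.rpow_pos_of_pos hyv _
    have hcv : c + h v < 0 := hneg v ⟨hv.1.le, hv.2.le⟩
    rw [hg, hmax]
    have : (c + h v) * y v ^ (1/p : ℝ) - D v ^ (pconj p - 1) * 0 < 0 := by
      have := mul_neg_of_neg_of_pos hcv hX
      linarith
    exact mul_neg_of_pos_of_neg hpc this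
  have hanti : StrictAntiOn y (Icc 0 δ) :=
    strictAntiOn_of_deriv_neg (convex_Icc 0 δ) hcont hderiv
  have hlt : y (δ/2) < y 0 :=
    hanti ⟨le_rfl, hδpos.le⟩ ⟨(half_pos hδpos).le, (half_le_self hδpos.le)⟩ (half_pos hδpos)
  have hpos : 0 < y (δ/2) := hy.pos _ ⟨half_pos hδpos, by linarith [half_lt_self hδpos]⟩
  rw [hy.y0] at hlt
  linarith
end

section
/- For all real numbers a > 0, b > 0 and r ≥ 2, one has a^r + r·a^{r−1}·b + b^r ≤ (a + b)^r. -/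
open Set MeasureTheory Filter

/-! For fixed `a ≥ 0`, the map `x ↦ (a + x)^r - r a^{r-1} x - x^r` has derivative
`r ((a + x)^{r-1} - a^{r-1} - x^{r-1})`, which is nonnegative on `x ≥ 0` because `t ↦ t^{r-1}` is
superadditive for `r - 1 ≥ 1`. So the map is monotone on `[0, ∞)`, and comparing its values at `0`
and `b` gives the inequality. -/

lemma hasDerivAt_add_rpow_sub_mul_sub_rpow (a : ℝ) {r : ℝ} (hr : 1 ≤ r) (x : ℝ) :
    HasDerivAt (fun x => (a + x) ^ r - r * a ^ (r - 1) * x - x ^ r)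
      (r * ((a + x) ^ (r - 1) - a ^ (r - 1) - x ^ (r - 1))) x := by
  have hshift := ((hasDerivAt_id' x).const_add a).rpow_const (p := r) (Or.inr hr)
  have hlin := (hasDerivAt_id' x).const_mul (r * a ^ (r - 1))
  have hpow := (hasDerivAt_id' x).rpow_const (p := r) (Or.inr hr)
  exact ((hshift.sub hlin).sub hpow).congr_deriv (by ring)

lemma monotoneOn_add_rpow_sub_mul_sub_rpow {a r : ℝ} (ha : 0 ≤ a) (hr : 2 ≤ r) :
    MonotoneOn (fun x => (a + x) ^ r - r * a ^ (r - 1) * x - x ^ r) (Ici 0) := by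
  have hderiv := hasDerivAt_add_rpow_sub_mul_sub_rpow a (r := r) (by linarith)
  refine monotoneOn_of_hasDerivWithinAt_nonneg (convex_Ici 0)
    (fun x _ => (hderiv x).continuousAt.continuousWithinAt)
    (fun x _ => (hderiv x).hasDerivWithinAt) fun x hx_int => ?_
  have hx : 0 ≤ x := le_of_lt (by simpa using hx_int)
  have hsuper := Real.add_rpow_le_rpow_add ha hx (by linarith : 1 ≤ r - 1)
  exact mul_nonneg (by linarith) (by linarith)

/-- Technical inequality, `r ≥ 2`.
For `a, b > 0` and `r ≥ 2`: `a^r + r a^{r-1} b + b^r ≤ (a+b)^r`. -/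
theorem stmt11 (a b r : ℝ) (ha : 0 < a) (hb : 0 < b) (hr : 2 ≤ r) :
    a ^ r + r * a ^ (r - 1) * b + b ^ r ≤ (a + b) ^ r := by
  have hmono := monotoneOn_add_rpow_sub_mul_sub_rpow ha.le hr
    (mem_Ici.2 le_rfl) (mem_Ici.2 hb.le) hb.le
  simp only [add_zero, mul_zero, sub_zero, Real.zero_rpow (by linarith : r ≠ 0)] at hmono
  linarith
end

section
/- For all real numbers a > 0, b > 0 and 1 < r < 2, one has a^r + r·a^{r−1}·b + b^r ≤ k̂(r)·(a + b)^r, where k̂(r) = (1 + r·(r−1)^{1/(r−2)} + (r−1)^{r/(r−2)}) / (1 + (r−1)^{1/(r−2)})^r. -/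
open Set MeasureTheory Filter

/-- The constant `k̂(r)` from the technical lemma. -/
noncomputable def khat (r : ℝ) : ℝ :=
  (1 + r * (r - 1) ^ ((1 : ℝ) / (r - 2)) + (r - 1) ^ (r / (r - 2))) /
    (1 + (r - 1) ^ ((1 : ℝ) / (r - 2))) ^ r

/-!
Dividing by `a ^ r` and setting `t = b / a` reduces the inequality to `φ t ≤ k̂(r)` for
`φ t = (1 + r t + t ^ r) / (1 + t) ^ r`. Its derivative is
`r (t ^ (r - 1) - (r - 1) t) / (1 + t) ^ (r + 1)`, which for `r < 2` is positive before and
negative after `t₀ = (r - 1) ^ (1 / (r - 2))`, the unique solution of `t ^ (r - 2) = r - 1`;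
hence `φ` is maximal at `t₀`, and `k̂(r) = φ t₀`.
-/

lemma le_of_hasDerivAt_nonneg_of_nonpos {f f' : ℝ → ℝ} {a c t : ℝ} (hac : a < c) (hat : a < t)
    (hf : ∀ x, a < x → HasDerivAt f (f' x) x)
    (hf'_left : ∀ x, a < x → x < c → 0 ≤ f' x) (hf'_right : ∀ x, c < x → f' x ≤ 0) :
    f t ≤ f c := by
  rcases le_total t c with htc | hct
  · have hmono : MonotoneOn f (Icc t c) := by
      refine monotoneOn_of_hasDerivWithinAt_nonneg (f' := f') (convex_Icc t c)
        (fun x hx => (hf x (hat.trans_le hx.1)).continuousAt.continuousWithinAt) ?_ ?_ <;>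
        rw [interior_Icc]
      · exact fun x hx => (hf x (hat.trans hx.1)).hasDerivWithinAt
      · exact fun x hx => hf'_left x (hat.trans hx.1) hx.2
    exact hmono (left_mem_Icc.2 htc) (right_mem_Icc.2 htc) htc
  · have hanti : AntitoneOn f (Icc c t) := by
      refine antitoneOn_of_hasDerivWithinAt_nonpos (f' := f') (convex_Icc c t)
        (fun x hx => (hf x (hac.trans_le hx.1)).continuousAt.continuousWithinAt) ?_ ?_ <;>
        rw [interior_Icc]
      · exact fun x hx => (hf x (hac.trans hx.1)).hasDerivWithinAt
      · exact fun x hx => hf'_right x hx.1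
    exact hanti (left_mem_Icc.2 hct) (right_mem_Icc.2 hct) hct

namespace Khat

/-- The ratio `(1 + r t + t ^ r) / (1 + t) ^ r`, whose supremum over `t > 0` is `k̂(r)`. -/
noncomputable def ratio (r t : ℝ) : ℝ := (1 + r * t + t ^ r) / (1 + t) ^ r

noncomputable def argmax (r : ℝ) : ℝ := (r - 1) ^ ((1 : ℝ) / (r - 2))

lemma argmax_pos {r : ℝ} (hr : 1 < r) : 0 < argmax r :=
  Real.rpow_pos_of_pos (by linarith) _

lemma argmax_rpow_sub_two {r : ℝ} (hr1 : 1 < r) (hr2 : r < 2) :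
    argmax r ^ (r - 2) = r - 1 := by
  rw [argmax, ← Real.rpow_mul (by linarith), one_div_mul_cancel (by linarith), Real.rpow_one]

lemma khat_eq_ratio_argmax {r : ℝ} (hr : 1 < r) :
    khat r = ratio r (argmax r) := by
  have hpow : argmax r ^ r = (r - 1) ^ (r / (r - 2)) := by
    rw [argmax, ← Real.rpow_mul (by linarith), one_div_mul_eq_div]
  rw [ratio, hpow, khat, argmax]

lemma hasDerivAt_ratio (r : ℝ) {t : ℝ} (ht : 0 < t) :
    HasDerivAt (ratio r) (r * (t ^ (r - 1) - (r - 1) * t) / (1 + t) ^ (r + 1)) t := by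
  have ht1 : 0 < 1 + t := by linarith
  have hnum : HasDerivAt (fun s => 1 + r * s + s ^ r) (r + r * t ^ (r - 1)) t :=
    (((hasDerivAt_id t).const_mul r).const_add 1).add (Real.hasDerivAt_rpow_const (.inl ht.ne'))
      |>.congr_deriv (by simp)
  have hden : HasDerivAt (fun s => (1 + s) ^ r) (r * (1 + t) ^ (r - 1)) t := by
    simpa using ((hasDerivAt_id t).const_add 1).rpow_const (p := r) (.inl ht1.ne')
  refine (hnum.div hden (Real.rpow_pos_of_pos ht1 r).ne').congr_deriv ?_
  have e1 : (1 + t) ^ r = (1 + t) ^ (r - 1) * (1 + t) := by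
    rw [← Real.rpow_add_one ht1.ne', sub_add_cancel]
  have e2 : (1 + t) ^ (r + 1) = (1 + t) ^ (r - 1) * (1 + t) ^ 2 := by
    rw [← Real.rpow_natCast, ← Real.rpow_add ht1]; congr 1; push_cast; ring
  have e3 : t ^ r = t ^ (r - 1) * t := by
    rw [← Real.rpow_add_one ht.ne', sub_add_cancel]
  have hpos : 0 < (1 + t) ^ (r - 1) := Real.rpow_pos_of_pos ht1 _
  rw [e1, e2, e3]
  field_simp
  ring

lemma sub_one_mul_le_rpow_sub_one {r t : ℝ} (hr1 : 1 < r) (hr2 : r < 2) (ht : 0 < t)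
    (hta : t ≤ argmax r) : (r - 1) * t ≤ t ^ (r - 1) := by
  have hpow : r - 1 ≤ t ^ (r - 2) :=
    argmax_rpow_sub_two hr1 hr2 ▸ Real.rpow_le_rpow_of_nonpos ht hta (by linarith)
  calc (r - 1) * t ≤ t ^ (r - 2) * t := by gcongr
    _ = t ^ (r - 1) := by rw [← Real.rpow_add_one ht.ne']; ring_nf

lemma rpow_sub_one_le_sub_one_mul {r t : ℝ} (hr1 : 1 < r) (hr2 : r < 2)
    (hat : argmax r ≤ t) : t ^ (r - 1) ≤ (r - 1) * t := by
  have ht : 0 < t := (argmax_pos hr1).trans_le hat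
  have hpow : t ^ (r - 2) ≤ r - 1 :=
    argmax_rpow_sub_two hr1 hr2 ▸ Real.rpow_le_rpow_of_nonpos (argmax_pos hr1) hat (by linarith)
  calc t ^ (r - 1) = t ^ (r - 2) * t := by rw [← Real.rpow_add_one ht.ne']; ring_nf
    _ ≤ (r - 1) * t := by gcongr

lemma ratio_le_khat {r t : ℝ} (hr1 : 1 < r) (hr2 : r < 2) (ht : 0 < t) :
    ratio r t ≤ khat r := by
  rw [khat_eq_ratio_argmax hr1]
  refine le_of_hasDerivAt_nonneg_of_nonpos (argmax_pos hr1) ht (fun x hx => hasDerivAt_ratio r hx)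
    (fun x hx hxa => ?_) (fun x hax => ?_)
  · have hle := sub_one_mul_le_rpow_sub_one hr1 hr2 hx hxa.le
    have hden : 0 < (1 + x) ^ (r + 1) := Real.rpow_pos_of_pos (by linarith) _
    exact div_nonneg (mul_nonneg (by linarith) (sub_nonneg.2 hle)) hden.le
  · have hle := rpow_sub_one_le_sub_one_mul hr1 hr2 hax.le
    have hden : 0 < (1 + x) ^ (r + 1) := Real.rpow_pos_of_pos (by linarith [argmax_pos hr1]) _
    exact div_nonpos_of_nonpos_of_nonneg
      (mul_nonpos_of_nonneg_of_nonpos (by linarith) (sub_nonpos.2 hle)) hden.le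

end Khat

/-- Technical inequality, `1 < r < 2`.
For `a, b > 0` and `1 < r < 2`: `a^r + r a^{r-1} b + b^r ≤ k̂(r) (a+b)^r`. -/
theorem stmt12 (a b r : ℝ) (ha : 0 < a) (hb : 0 < b) (hr1 : 1 < r) (hr2 : r < 2) :
    a ^ r + r * a ^ (r - 1) * b + b ^ r ≤ khat r * (a + b) ^ r := by
  obtain ⟨t, ht, rfl⟩ : ∃ t, 0 < t ∧ b = a * t := ⟨b / a, div_pos hb ha, by field_simp⟩
  have hnum : a ^ r + r * a ^ (r - 1) * (a * t) + (a * t) ^ r = a ^ r * (1 + r * t + t ^ r) := by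
    have hpow : a ^ (r - 1) * a = a ^ r := by rw [← Real.rpow_add_one ha.ne', sub_add_cancel]
    rw [Real.mul_rpow ha.le ht.le, ← hpow]
    ring
  have hden : (a + a * t) ^ r = a ^ r * (1 + t) ^ r := by
    rw [← Real.mul_rpow ha.le (by linarith), mul_one_add]
  have hratio : 1 + r * t + t ^ r ≤ khat r * (1 + t) ^ r :=
    (div_le_iff₀ (Real.rpow_pos_of_pos (by linarith) r)).1 (Khat.ratio_le_khat hr1 hr2 ht)
  rw [hnum, hden, mul_left_comm]
  exact mul_le_mul_of_nonneg_left hratio (Real.rpow_pos_of_pos ha r).le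
end

section
/- Let 1 < r < 2 and define f(t) = (1 + r·t + t^r)/(1 + t)^r for t ≥ 0. Then f attains its maximum over [0, +∞) at the point t₁ = (r−1)^{1/(r−2)}, t₁ is the only stationary point of f in (0, +∞), and the maximum value equals k̂(r) = (1 + r·(r−1)^{1/(r−2)} + (r−1)^{r/(r−2)}) / (1 + (r−1)^{1/(r−2)})^r. -/
open Set MeasureTheory Filter

/-!
For `t > 0`,
`f'(t) = r t (t ^ (r - 2) - (r - 1)) / (1 + t) ^ (r + 1)`.
Since `r - 2 < 0`, the map `t ↦ t ^ (r - 2)` is strictly decreasing on `(0, ∞)` and takes the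
value `r - 1` exactly at `t₁ = (r - 1) ^ (1 / (r - 2))`. Hence `f' > 0` on `(0, t₁)` and
`f' < 0` on `(t₁, ∞)`, so `f` increases on `[0, t₁]`, decreases on `[t₁, ∞)`, and `t₁` is its
only stationary point.
-/

open Real

noncomputable def auxFun (r t : ℝ) : ℝ := (1 + r * t + t ^ r) / (1 + t) ^ r

noncomputable def critPoint (r : ℝ) : ℝ := (r - 1) ^ ((1 : ℝ) / (r - 2))

lemma hasDerivAt_auxFun (r : ℝ) {t : ℝ} (ht : 0 < t) :
    HasDerivAt (auxFun r) (r * t * (t ^ (r - 2) - (r - 1)) / (1 + t) ^ (r + 1)) t := by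
  have h1t : 0 < 1 + t := by linarith
  have hnum : HasDerivAt (fun t : ℝ => 1 + r * t + t ^ r) (r + r * t ^ (r - 1)) t := by
    have hlin : HasDerivAt (fun t : ℝ => 1 + r * t) r t := by
      simpa using ((hasDerivAt_id t).const_mul r).const_add 1
    exact hlin.add (hasDerivAt_rpow_const (Or.inl ht.ne'))
  have hden : HasDerivAt (fun t : ℝ => (1 + t) ^ r) (r * (1 + t) ^ (r - 1)) t := by
    simpa using ((hasDerivAt_id t).const_add 1).rpow_const (p := r) (Or.inl h1t.ne')
  refine (hnum.div hden (rpow_pos_of_pos h1t r).ne').congr_deriv ?_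
  have e1 : (1 + t) ^ r = (1 + t) ^ (r - 1) * (1 + t) := by
    rw [← rpow_add_one h1t.ne']; ring_nf
  have e2 : (1 + t) ^ (r + 1) = (1 + t) ^ (r - 1) * (1 + t) * (1 + t) := by
    rw [← rpow_add_one h1t.ne', ← rpow_add_one h1t.ne']; ring_nf
  have e3 : t ^ (r - 1) = t ^ (r - 2) * t := by
    rw [← rpow_add_one ht.ne']; ring_nf
  have e4 : t ^ r = t ^ (r - 2) * t * t := by
    rw [← rpow_add_one ht.ne', ← rpow_add_one ht.ne']; ring_nf
  have : (1 + t) ^ (r - 1) ≠ 0 := (rpow_pos_of_pos h1t _).ne'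
  rw [e1, e2, e3, e4]
  field_simp
  ring

lemma continuousOn_auxFun {r : ℝ} (hr : 0 ≤ r) : ContinuousOn (auxFun r) (Ici 0) := by
  intro t ht
  have h1t : 0 < 1 + t := by linarith [mem_Ici.1 ht]
  refine ContinuousAt.continuousWithinAt (ContinuousAt.div ?_ ?_ (rpow_pos_of_pos h1t r).ne')
  · exact (continuousAt_const.add (continuousAt_const.mul continuousAt_id)).add
      (continuousAt_rpow_const t r (Or.inr hr))
  · exact (continuousAt_const.add continuousAt_id).rpow_const (Or.inl h1t.ne')

lemma critPoint_pos {r : ℝ} (hr : 1 < r) : 0 < critPoint r :=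
  rpow_pos_of_pos (by linarith) _

lemma critPoint_rpow_sub_two {r : ℝ} (hr1 : 1 < r) (hr2 : r ≠ 2) :
    critPoint r ^ (r - 2) = r - 1 := by
  rw [critPoint, one_div, rpow_inv_rpow (by linarith) (sub_ne_zero.2 hr2)]

lemma sub_one_lt_rpow_sub_two_iff {r t : ℝ} (hr1 : 1 < r) (hr2 : r < 2) (ht : 0 < t) :
    r - 1 < t ^ (r - 2) ↔ t < critPoint r := by
  rw [← critPoint_rpow_sub_two hr1 hr2.ne]
  exact StrictAntiOn.lt_iff_gt (strictAntiOn_rpow_Ioi_of_exponent_neg (by linarith))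
    (critPoint_pos hr1) ht

lemma rpow_sub_two_lt_sub_one_iff {r t : ℝ} (hr1 : 1 < r) (hr2 : r < 2) (ht : 0 < t) :
    t ^ (r - 2) < r - 1 ↔ critPoint r < t := by
  rw [← critPoint_rpow_sub_two hr1 hr2.ne]
  exact StrictAntiOn.lt_iff_gt (strictAntiOn_rpow_Ioi_of_exponent_neg (by linarith))
    ht (critPoint_pos hr1)

lemma rpow_sub_two_eq_sub_one_iff {r t : ℝ} (hr1 : 1 < r) (hr2 : r < 2) (ht : 0 < t) :
    t ^ (r - 2) = r - 1 ↔ t = critPoint r := by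
  rw [← critPoint_rpow_sub_two hr1 hr2.ne]
  exact StrictAntiOn.injOn (strictAntiOn_rpow_Ioi_of_exponent_neg (by linarith)) |>.eq_iff
    ht (critPoint_pos hr1)

lemma strictMonoOn_auxFun {r : ℝ} (hr1 : 1 < r) (hr2 : r < 2) :
    StrictMonoOn (auxFun r) (Icc 0 (critPoint r)) := by
  refine strictMonoOn_of_deriv_pos (convex_Icc _ _)
    ((continuousOn_auxFun (by linarith)).mono Icc_subset_Ici_self) ?_
  rw [interior_Icc]
  rintro t ⟨ht0, ht⟩
  rw [(hasDerivAt_auxFun r ht0).deriv]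
  have := (sub_one_lt_rpow_sub_two_iff hr1 hr2 ht0).2 ht
  exact div_pos (mul_pos (by positivity) (sub_pos.2 this)) (by positivity)

lemma strictAntiOn_auxFun {r : ℝ} (hr1 : 1 < r) (hr2 : r < 2) :
    StrictAntiOn (auxFun r) (Ici (critPoint r)) := by
  refine strictAntiOn_of_deriv_neg (convex_Ici _)
    ((continuousOn_auxFun (by linarith)).mono (Ici_subset_Ici.2 (critPoint_pos hr1).le)) ?_
  intro t ht
  rw [interior_Ici] at ht
  have ht0 : 0 < t := (critPoint_pos hr1).trans ht
  rw [(hasDerivAt_auxFun r ht0).deriv]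
  have := (rpow_sub_two_lt_sub_one_iff hr1 hr2 ht0).2 ht
  exact div_neg_of_neg_of_pos (mul_neg_of_pos_of_neg (by positivity) (sub_neg.2 this))
    (by positivity)

lemma isMaxOn_auxFun_critPoint {r : ℝ} (hr1 : 1 < r) (hr2 : r < 2) :
    IsMaxOn (auxFun r) (Ici 0) (critPoint r) := by
  intro t ht
  have ht₁ := (critPoint_pos hr1).le
  rcases le_total t (critPoint r) with h | h
  · exact (strictMonoOn_auxFun hr1 hr2).monotoneOn ⟨ht, h⟩ ⟨ht₁, le_rfl⟩ h
  · exact (strictAntiOn_auxFun hr1 hr2).antitoneOn (mem_Ici.2 le_rfl) h h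

lemma deriv_auxFun_eq_zero_iff {r t : ℝ} (hr1 : 1 < r) (hr2 : r < 2) (ht : 0 < t) :
    deriv (auxFun r) t = 0 ↔ t = critPoint r := by
  have : (1 + t) ^ (r + 1) ≠ 0 := by positivity
  rw [(hasDerivAt_auxFun r ht).deriv, div_eq_zero_iff, or_iff_left this, mul_eq_zero,
    mul_eq_zero, sub_eq_zero, rpow_sub_two_eq_sub_one_iff hr1 hr2 ht]
  simp [(by linarith : r ≠ 0), ht.ne']

lemma auxFun_critPoint {r : ℝ} (hr : 1 < r) : auxFun r (critPoint r) = khat r := by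
  rw [auxFun, khat, critPoint, ← rpow_mul (by linarith), one_div_mul_eq_div]

/-- Maximum of the auxiliary function for `1 < r < 2`.
`f(t) = (1 + r t + t^r)/(1+t)^r` attains its maximum over `[0,∞)` at
`t₁ = (r-1)^{1/(r-2)}`, which is the only stationary point of `f` in `(0,∞)`,
and the maximal value is `k̂(r)`. -/
theorem stmt13 (r : ℝ) (hr1 : 1 < r) (hr2 : r < 2) :
    (∀ t : ℝ, 0 ≤ t →
        (1 + r * t + t ^ r) / (1 + t) ^ r ≤
        (1 + r * ((r - 1) ^ ((1 : ℝ) / (r - 2))) +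
            ((r - 1) ^ ((1 : ℝ) / (r - 2))) ^ r) /
          (1 + (r - 1) ^ ((1 : ℝ) / (r - 2))) ^ r) ∧
    deriv (fun t : ℝ => (1 + r * t + t ^ r) / (1 + t) ^ r) ((r - 1) ^ ((1 : ℝ) / (r - 2))) = 0 ∧
    (∀ t : ℝ, 0 < t →
        deriv (fun t : ℝ => (1 + r * t + t ^ r) / (1 + t) ^ r) t = 0 →
        t = (r - 1) ^ ((1 : ℝ) / (r - 2))) ∧
    (1 + r * ((r - 1) ^ ((1 : ℝ) / (r - 2))) +
        ((r - 1) ^ ((1 : ℝ) / (r - 2))) ^ r) /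
      (1 + (r - 1) ^ ((1 : ℝ) / (r - 2))) ^ r = khat r :=
  ⟨fun _ ht => isMaxOn_auxFun_critPoint hr1 hr2 ht,
    (deriv_auxFun_eq_zero_iff hr1 hr2 (critPoint_pos hr1)).2 rfl,
    fun _ ht => (deriv_auxFun_eq_zero_iff hr1 hr2 ht).1,
    auxFun_critPoint hr1⟩
end

section
/- For all real numbers a > 0, b > 0 and r > 2, one has the strict inequality a^r + r·a^{r−1}·b + b^r < (a + b)^r; equivalently, for r > 2 the function f(t) = (1 + r·t + t^r)/(1 + t)^r satisfies f(t) < 1 for all t > 0, with f(0) = 1 and f(t) → 1 as t → +∞. -/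
open Set MeasureTheory Filter

/-! For `s > 1` and `a, b > 0` one has `a ^ s + b ^ s < (a + b) ^ s`, since `x ^ s = x ^ (s - 1) * x`
and `x ^ (s - 1)` increases strictly. Applied with `s = r - 1 > 1`, this shows that
`(1 + t) ^ r - (1 + r t + t ^ r)`, which vanishes at `t = 0`, has positive derivative for `t > 0`.
The expression `a ^ r + r a ^ (r - 1) b + b ^ r` is homogeneous of degree `r` in `(a, b)`, which
reduces the two-variable inequality to `a = 1`, and turns the limit at `t → ∞` into continuity at
`0` of `s ↦ (s ^ r + r s ^ (r - 1) + 1) / (s + 1) ^ r`. -/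

open Real

lemma Real.add_rpow_lt_rpow_add {p a b : ℝ} (ha : 0 < a) (hb : 0 < b) (hp : 1 < p) :
    a ^ p + b ^ p < (a + b) ^ p := by
  have hab : 0 < a + b := add_pos ha hb
  have hlt : ∀ x, 0 < x → x < a + b → x ^ p < (a + b) ^ (p - 1) * x := fun x hx hxab =>
    calc x ^ p = x ^ (p - 1) * x := by rw [← rpow_add_one hx.ne', sub_add_cancel]
      _ < (a + b) ^ (p - 1) * x := by gcongr
  calc a ^ p + b ^ p < (a + b) ^ (p - 1) * a + (a + b) ^ (p - 1) * b :=
        add_lt_add (hlt a ha (by linarith)) (hlt b hb (by linarith))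
    _ = (a + b) ^ p := by rw [← mul_add, ← rpow_add_one hab.ne', sub_add_cancel]

lemma one_add_mul_add_rpow_lt_one_add_rpow {r t : ℝ} (hr : 2 < r) (ht : 0 < t) :
    1 + r * t + t ^ r < (1 + t) ^ r := by
  set gap : ℝ → ℝ := fun t => (1 + t) ^ r - (1 + r * t + t ^ r)
  have hgap : ∀ t, HasDerivAt gap (r * (1 + t) ^ (r - 1) - (r + r * t ^ (r - 1))) t := by
    intro t
    have h1 : HasDerivAt (fun t => (1 + t) ^ r) (r * (1 + t) ^ (r - 1)) t := by
      simpa using ((hasDerivAt_id t).const_add 1).rpow_const (p := r) (Or.inr (by linarith))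
    have h2 : HasDerivAt (fun t => 1 + r * t + t ^ r) (r + r * t ^ (r - 1)) t := by
      refine ((((hasDerivAt_id' t).const_mul r).const_add 1).add
        (hasDerivAt_rpow_const (Or.inr (by linarith)))).congr_deriv ?_
      rw [mul_one]
    exact h1.sub h2
  have hmono : StrictMonoOn gap (Ici 0) := by
    refine strictMonoOn_of_hasDerivWithinAt_pos (convex_Ici 0)
      (fun t _ => (hgap t).continuousAt.continuousWithinAt)
      (fun t _ => (hgap t).hasDerivWithinAt) fun t ht => ?_
    rw [interior_Ici] at ht
    have := Real.add_rpow_lt_rpow_add one_pos ht (by linarith : 1 < r - 1)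
    rw [one_rpow] at this
    linarith [mul_lt_mul_of_pos_left this (by linarith : 0 < r)]
  have h := hmono self_mem_Ici ht.le ht
  simp only [gap, add_zero, mul_zero, one_rpow, zero_rpow (by linarith : r ≠ 0), sub_self] at h
  linarith

/-- The terms `a ^ r + r a ^ (r - 1) b` and `b ^ r` of the binomial series of `(a + b) ^ r`. -/
noncomputable def truncBinom (r a b : ℝ) : ℝ := a ^ r + r * a ^ (r - 1) * b + b ^ r

section truncBinom

variable {r a b t : ℝ}

lemma truncBinom_one_left (t : ℝ) : truncBinom r 1 t = 1 + r * t + t ^ r := by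
  simp [truncBinom]

lemma truncBinom_mul_mul {c : ℝ} (hc : 0 < c) (ha : 0 ≤ a) (hb : 0 ≤ b) :
    truncBinom r (c * a) (c * b) = c ^ r * truncBinom r a b := by
  simp only [truncBinom, mul_rpow hc.le ha, mul_rpow hc.le hb, rpow_sub_one hc.ne']
  field_simp

lemma truncBinom_lt_add_rpow (hr : 2 < r) (ha : 0 < a) (hb : 0 < b) :
    truncBinom r a b < (a + b) ^ r := by
  have hscale : truncBinom r a b = a ^ r * truncBinom r 1 (b / a) := by
    rw [← truncBinom_mul_mul ha zero_le_one (div_nonneg hb.le ha.le), mul_one,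
      mul_div_cancel₀ b ha.ne']
  have hsum : (a + b) ^ r = a ^ r * (1 + b / a) ^ r := by
    rw [← mul_rpow ha.le (by positivity), mul_add, mul_one, mul_div_cancel₀ b ha.ne']
  rw [hscale, hsum, truncBinom_one_left]
  gcongr
  exact one_add_mul_add_rpow_lt_one_add_rpow hr (div_pos hb ha)

lemma truncBinom_one_div_eq_inv (ht : 0 < t) :
    truncBinom r 1 t / (1 + t) ^ r = truncBinom r t⁻¹ 1 / (t⁻¹ + 1) ^ r := by
  have hinv : 0 < t⁻¹ := inv_pos.mpr ht
  have hnum : truncBinom r t⁻¹ 1 = t⁻¹ ^ r * truncBinom r 1 t := by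
    simpa [inv_mul_cancel₀ ht.ne'] using truncBinom_mul_mul (r := r) hinv zero_le_one ht.le
  have hden : (t⁻¹ + 1) ^ r = t⁻¹ ^ r * (1 + t) ^ r := by
    rw [← mul_rpow hinv.le (by positivity), mul_add, mul_one, inv_mul_cancel₀ ht.ne']
  rw [hnum, hden, mul_div_mul_left _ _ (by positivity)]

lemma tendsto_truncBinom_one_div_atTop (hr : 1 < r) :
    Tendsto (fun t => truncBinom r 1 t / (1 + t) ^ r) atTop (nhds 1) := by
  have hcont : ContinuousAt (fun s => truncBinom r s 1 / (s + 1) ^ r) 0 := by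
    unfold truncBinom
    fun_prop (disch := first | linarith | norm_num)
  have hzero : truncBinom r 0 1 / (0 + 1) ^ r = 1 := by
    simp [truncBinom, zero_rpow (by linarith : r ≠ 0), zero_rpow (by linarith : r - 1 ≠ 0)]
  have h := hcont.tendsto.comp tendsto_inv_atTop_zero
  rw [hzero] at h
  refine h.congr' ?_
  filter_upwards [eventually_gt_atTop 0] with t ht
  exact (truncBinom_one_div_eq_inv ht).symm

end truncBinom

/-- Strict technical inequality for `r > 2`.
For `a, b > 0` and `r > 2`: `a^r + r a^{r-1} b + b^r < (a+b)^r`; equivalently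
`f(t) = (1 + r t + t^r)/(1+t)^r < 1` for `t > 0`, with `f(0) = 1` and `f(t) → 1`
as `t → +∞`. -/
theorem stmt14 (r : ℝ) (hr : 2 < r) :
    (∀ a b : ℝ, 0 < a → 0 < b →
        a ^ r + r * a ^ (r - 1) * b + b ^ r < (a + b) ^ r) ∧
    (∀ t : ℝ, 0 < t → (1 + r * t + t ^ r) / (1 + t) ^ r < 1) ∧
    (1 + r * (0 : ℝ) + (0 : ℝ) ^ r) / (1 + (0 : ℝ)) ^ r = 1 ∧
    Tendsto (fun t : ℝ => (1 + r * t + t ^ r) / (1 + t) ^ r) atTop (nhds 1) := by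
  refine ⟨fun a b ha hb => truncBinom_lt_add_rpow hr ha hb, fun t ht => ?_, ?_, ?_⟩
  · rw [div_lt_one (by positivity)]
    exact one_add_mul_add_rpow_lt_one_add_rpow hr ht
  · simp [zero_rpow (by linarith : r ≠ 0)]
  · simpa only [truncBinom_one_left] using tendsto_truncBinom_one_div_atTop (by linarith)
end
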